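/- arXiv:2203.00373 — 7 statements merged into one kernel-verified Lean document; each statement's English description precedes it below -/
import Mathlib

section
/- For every natural number k, the matrix identities R_G̃ · R_D̃^k · R_G = R_G · R_D^k · R_G̃ and R_D̃ · R_G̃^k · R_D = R_D · R_G^k · R_D̃ hold, where R_G̃, R_G, R_D̃, R_D are the 3×3 integer matrices [[1,1,0],[0,1,0],[0,1,1]], [[1,1,0],[0,1,0],[0,0,1]], [[1,0,0],[1,1,0],[0,0,1]], [[1,0,0],[1,1,0],[1,0,1]] respectively. -/
/-! Each of the four matrices is unipotent, `X = 1 + N` with `N * N = 0`, so `X ^ k = 1 + k • N`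
and both sides of each identity are affine in `k`. It therefore suffices to compare the constant
terms and the coefficients of `k`, which are fixed matrix products. -/

open Matrix

section UnipotentPowers

variable {R : Type*} [Ring R]

theorem pow_eq_one_add_nsmul_sub_one {X : R} (hX : (X - 1) * (X - 1) = 0) (k : ℕ) :
    X ^ k = 1 + k • (X - 1) := by
  induction k with
  | zero => simp
  | succ k ih =>
    calc X ^ (k + 1) = (1 + k • (X - 1)) * (1 + (X - 1)) := by rw [pow_succ, ih, add_sub_cancel]
      _ = 1 + (k + 1) • (X - 1) := by
        rw [mul_add, mul_one, add_mul, one_mul, smul_mul_assoc, hX, smul_zero, add_zero, succ_nsmul]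
        abel

theorem mul_pow_mul_eq_mul_pow_mul {A B C D X Y : R}
    (hX : (X - 1) * (X - 1) = 0) (hY : (Y - 1) * (Y - 1) = 0)
    (h₀ : A * B = C * D) (h₁ : A * (X - 1) * B = C * (Y - 1) * D) (k : ℕ) :
    A * X ^ k * B = C * Y ^ k * D := by
  simp only [pow_eq_one_add_nsmul_sub_one hX, pow_eq_one_add_nsmul_sub_one hY, mul_add, add_mul,
    mul_one, mul_smul_comm, smul_mul_assoc, h₀, h₁]

end UnipotentPowers

theorem stmt_0 (k : ℕ) :
    (!![1,1,0;0,1,0;0,1,1] : Matrix (Fin 3) (Fin 3) ℤ) * (!![1,0,0;1,1,0;0,0,1] : Matrix (Fin 3) (Fin 3) ℤ) ^ k * !![1,1,0;0,1,0;0,0,1]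
      = (!![1,1,0;0,1,0;0,0,1] : Matrix (Fin 3) (Fin 3) ℤ) * (!![1,0,0;1,1,0;1,0,1] : Matrix (Fin 3) (Fin 3) ℤ) ^ k * !![1,1,0;0,1,0;0,1,1] ∧
    (!![1,0,0;1,1,0;0,0,1] : Matrix (Fin 3) (Fin 3) ℤ) * (!![1,1,0;0,1,0;0,1,1] : Matrix (Fin 3) (Fin 3) ℤ) ^ k * !![1,0,0;1,1,0;1,0,1]
      = (!![1,0,0;1,1,0;1,0,1] : Matrix (Fin 3) (Fin 3) ℤ) * (!![1,1,0;0,1,0;0,0,1] : Matrix (Fin 3) (Fin 3) ℤ) ^ k * !![1,0,0;1,1,0;0,0,1] := by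
  constructor <;> apply mul_pow_mul_eq_mul_pow_mul <;> decide
end

section
/- The convex cone C₂ = {(x,y,z) ∈ ℝ³ : 0 ≤ x, y ≤ 0, y ≤ z ≤ x} is invariant under multiplication by the inverse of each of the matrices R_G, R_G̃, R_D, R_D̃. -/
/-!
Each of the four matrices is unipotent, so `R⁻¹ v` is the unique `w` with `R w = v`, and it
suffices to exhibit, for every `v = (x, y, z)` in the cone, a preimage in the cone. These
preimages are `(x - y, y, z)`, `(x - y, y, z - y)`, `(x, y - x, z - x)` and `(x, y - x, z)`
for `R_G`, `R_G̃`, `R_D`, `R_D̃`; they stay in the cone because `y ≤ 0 ≤ x`.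
-/

open Matrix

theorem Matrix.mapsTo_inv_mulVec_of_subset_image {n α : Type*} [Fintype n] [DecidableEq n]
    [CommRing α] {R : Matrix n n α} (hR : IsUnit R.det) {C : Set (n → α)}
    (hC : C ⊆ (R *ᵥ ·) '' C) : Set.MapsTo (R⁻¹ *ᵥ ·) C C := by
  intro v hv
  obtain ⟨w, hw, rfl⟩ := hC hv
  simpa only [mulVec_mulVec, nonsing_inv_mul _ hR, one_mulVec] using hw

def cone₂ : Set (Fin 3 → ℝ) := {v | 0 ≤ v 0 ∧ v 1 ≤ 0 ∧ v 1 ≤ v 2 ∧ v 2 ≤ v 0}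

theorem cone₂_subset_image_G :
    cone₂ ⊆ ((!![1,1,0;0,1,0;0,0,1] : Matrix (Fin 3) (Fin 3) ℝ) *ᵥ ·) '' cone₂ := by
  rintro v ⟨h0, h1, h2, h3⟩
  refine ⟨![v 0 - v 1, v 1, v 2], ?_, ?_⟩
  · refine ⟨?_, ?_, ?_, ?_⟩ <;> simp only [Matrix.cons_val] <;> linarith
  · ext i; fin_cases i <;> simp [mulVec, dotProduct, Fin.sum_univ_three]

theorem cone₂_subset_image_Gtilde :
    cone₂ ⊆ ((!![1,1,0;0,1,0;0,1,1] : Matrix (Fin 3) (Fin 3) ℝ) *ᵥ ·) '' cone₂ := by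
  rintro v ⟨h0, h1, h2, h3⟩
  refine ⟨![v 0 - v 1, v 1, v 2 - v 1], ?_, ?_⟩
  · refine ⟨?_, ?_, ?_, ?_⟩ <;> simp only [Matrix.cons_val] <;> linarith
  · ext i; fin_cases i <;> simp [mulVec, dotProduct, Fin.sum_univ_three]

theorem cone₂_subset_image_D :
    cone₂ ⊆ ((!![1,0,0;1,1,0;1,0,1] : Matrix (Fin 3) (Fin 3) ℝ) *ᵥ ·) '' cone₂ := by
  rintro v ⟨h0, h1, h2, h3⟩
  refine ⟨![v 0, v 1 - v 0, v 2 - v 0], ?_, ?_⟩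
  · refine ⟨?_, ?_, ?_, ?_⟩ <;> simp only [Matrix.cons_val] <;> linarith
  · ext i; fin_cases i <;> simp [mulVec, dotProduct, Fin.sum_univ_three]

theorem cone₂_subset_image_Dtilde :
    cone₂ ⊆ ((!![1,0,0;1,1,0;0,0,1] : Matrix (Fin 3) (Fin 3) ℝ) *ᵥ ·) '' cone₂ := by
  rintro v ⟨h0, h1, h2, h3⟩
  refine ⟨![v 0, v 1 - v 0, v 2], ?_, ?_⟩
  · refine ⟨?_, ?_, ?_, ?_⟩ <;> simp only [Matrix.cons_val] <;> linarith
  · ext i; fin_cases i <;> simp [mulVec, dotProduct, Fin.sum_univ_three]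

theorem stmt_3
    (C₂ : Set (Fin 3 → ℝ))
    (hC₂ : C₂ = {v | 0 ≤ v 0 ∧ v 1 ≤ 0 ∧ v 1 ≤ v 2 ∧ v 2 ≤ v 0}) :
    ∀ R ∈ ({!![1,1,0;0,1,0;0,0,1], !![1,1,0;0,1,0;0,1,1],
             !![1,0,0;1,1,0;1,0,1], !![1,0,0;1,1,0;0,0,1]} : Set (Matrix (Fin 3) (Fin 3) ℝ)),
      ∀ v ∈ C₂, R⁻¹.mulVec v ∈ C₂ := by
  subst hC₂
  intro R hR
  simp only [Set.mem_insert_iff, Set.mem_singleton_iff] at hR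
  rcases hR with rfl | rfl | rfl | rfl <;>
    refine mapsTo_inv_mulVec_of_subset_image (by simp [det_fin_three]) ?_
  exacts [cone₂_subset_image_G, cone₂_subset_image_Gtilde, cone₂_subset_image_D,
    cone₂_subset_image_Dtilde]
end

section
/- If A, B, C, D, E, F are natural numbers satisfying E < A + C, F < B + D, and A·D − B·C = 1 (over the integers), then −A < A·F − B·E ≤ B if and only if −C ≤ C·F − D·E < D. -/
/-!
Write `x = a f - b e` and `y = c f - d e`. Since `a d - b c = 1`, the matrix `[[a, b], [c, d]]`
inverts over `ℤ`, giving back `e = c x - a y` and `f = d x - b y`. With nonnegative entries these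
expressions are monotone in `x` and `y`, so pushing `y` (resp. `x`) just outside its window forces
`e` (resp. `f`) below `0` or up to `a + c` (resp. `b + d`).
-/

section DetEqOne

variable {R : Type*} [CommRing R] {a b c d : R}

theorem eq_mul_sub_mul_of_det_eq_one (hdet : a * d - b * c = 1) (e f : R) :
    e = c * (a * f - b * e) - a * (c * f - d * e) := by
  linear_combination (-e) * hdet

theorem eq_mul_sub_mul_of_det_eq_one' (hdet : a * d - b * c = 1) (e f : R) :
    f = d * (a * f - b * e) - b * (c * f - d * e) := by
  linear_combination (-f) * hdet

end DetEqOne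

section IntWindows

variable {a b c d e f : ℤ}

theorem mem_Ico_of_mem_Ioc_of_det_eq_one (ha : 0 ≤ a) (hc : 0 ≤ c) (he : 0 ≤ e)
    (he' : e < a + c) (hdet : a * d - b * c = 1) (hx : a * f - b * e ∈ Set.Ioc (-a) b) :
    c * f - d * e ∈ Set.Ico (-c) d := by
  obtain ⟨hx_lo, hx_hi⟩ := hx
  have he_eq := eq_mul_sub_mul_of_det_eq_one hdet e f
  constructor
  · by_contra! hy
    have : a + c ≤ e := calc
      a + c = c * (-a + 1) - a * (-c - 1) := by ring
      _ ≤ c * (a * f - b * e) - a * (c * f - d * e) :=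
        sub_le_sub (mul_le_mul_of_nonneg_left (by omega) hc)
          (mul_le_mul_of_nonneg_left (by omega) ha)
      _ = e := he_eq.symm
    omega
  · by_contra! hy
    have : e ≤ -1 := calc
      e = c * (a * f - b * e) - a * (c * f - d * e) := he_eq
      _ ≤ c * b - a * d := by gcongr
      _ = -1 := by linear_combination -hdet
    omega

theorem mem_Ioc_of_mem_Ico_of_det_eq_one (hb : 0 ≤ b) (hd : 0 ≤ d) (hf : 0 ≤ f)
    (hf' : f < b + d) (hdet : a * d - b * c = 1) (hy : c * f - d * e ∈ Set.Ico (-c) d) :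
    a * f - b * e ∈ Set.Ioc (-a) b := by
  obtain ⟨hy_lo, hy_hi⟩ := hy
  have hf_eq := eq_mul_sub_mul_of_det_eq_one' hdet e f
  constructor
  · by_contra! hx
    have : f ≤ -1 := calc
      f = d * (a * f - b * e) - b * (c * f - d * e) := hf_eq
      _ ≤ d * (-a) - b * (-c) := by gcongr
      _ = -1 := by linear_combination -hdet
    omega
  · by_contra! hx
    have : b + d ≤ f := calc
      b + d = d * (b + 1) - b * (d - 1) := by ring
      _ ≤ d * (a * f - b * e) - b * (c * f - d * e) :=
        sub_le_sub (mul_le_mul_of_nonneg_left (by omega) hd)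
          (mul_le_mul_of_nonneg_left (by omega) hb)
      _ = f := hf_eq.symm
    omega

end IntWindows

theorem stmt_5 (A B C D E F : ℕ)
    (hE : (E : ℤ) < A + C) (hF : (F : ℤ) < B + D)
    (hdet : (A : ℤ) * D - B * C = 1) :
    (-(A : ℤ) < A * F - B * E ∧ (A : ℤ) * F - B * E ≤ B) ↔
    (-(C : ℤ) ≤ C * F - D * E ∧ (C : ℤ) * F - D * E < D) := by
  have hA := Int.natCast_nonneg A
  have hB := Int.natCast_nonneg B
  have hC := Int.natCast_nonneg C
  have hD := Int.natCast_nonneg D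
  exact ⟨mem_Ico_of_mem_Ioc_of_det_eq_one hA hC (Int.natCast_nonneg E) hE hdet,
    mem_Ioc_of_mem_Ico_of_det_eq_one hB hD (Int.natCast_nonneg F) hF hdet⟩
end

section
/- Let R be a 3×3 integer matrix with determinant 1 such that R maps the cone C₃ = {(0,0,z) : z ≥ 0} into itself and R maps the cone C₁ = {(x,y,z) : 0 ≤ x, 0 ≤ y, 0 ≤ z ≤ x+y} into itself. Then R has the form [[A,B,0],[C,D,0],[E,F,1]] with all entries A,B,C,D,E,F nonnegative, A·D − B·C = 1, E < A + C, and F < B + D. -/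
/-!
Testing the cone conditions on the generator `(0,0,1)` of `C₃` and on the extreme rays
`(1,0,0)`, `(0,1,0)`, `(1,0,1)`, `(0,1,1)` of `C₁` gives the vanishing of `R 0 2`, `R 1 2`, the
nonnegativity of the remaining entries and `E + R 2 2 ≤ A + C`, `F + R 2 2 ≤ B + D`. The matrix is
then block lower triangular, so `1 = det R = R 2 2 * (A D - B C)` with `R 2 2 ≥ 0` forces
`R 2 2 = 1`, which turns the two inequalities into the strict ones.
-/

open Matrix

lemma Matrix.map_intCast_mulVec_vec3 {K : Type*} [Ring K] (R : Matrix (Fin 3) (Fin 3) ℤ)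
    (a b c : K) (i : Fin 3) :
    (R.map (Int.cast : ℤ → K) *ᵥ ![a, b, c]) i = R i 0 * a + R i 1 * b + R i 2 * c := by
  simp [mulVec, dotProduct, Fin.sum_univ_three]

lemma Matrix.det_fin_three_of_col_two_eq_zero {K : Type*} [CommRing K]
    (R : Matrix (Fin 3) (Fin 3) K) (h02 : R 0 2 = 0) (h12 : R 1 2 = 0) :
    R.det = R 2 2 * (R 0 0 * R 1 1 - R 0 1 * R 1 0) := by
  rw [det_fin_three, h02, h12]
  ring

theorem stmt_8 (R : Matrix (Fin 3) (Fin 3) ℤ)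
    (hdet : R.det = 1)
    (hC3 : ∀ v : Fin 3 → ℝ, (v 0 = 0 ∧ v 1 = 0 ∧ 0 ≤ v 2) →
      ((R.map (Int.cast : ℤ → ℝ)).mulVec v 0 = 0 ∧ (R.map (Int.cast : ℤ → ℝ)).mulVec v 1 = 0 ∧
        0 ≤ (R.map (Int.cast : ℤ → ℝ)).mulVec v 2))
    (hC1 : ∀ v : Fin 3 → ℝ, (0 ≤ v 0 ∧ 0 ≤ v 1 ∧ 0 ≤ v 2 ∧ v 2 ≤ v 0 + v 1) →
      (0 ≤ (R.map (Int.cast : ℤ → ℝ)).mulVec v 0 ∧ 0 ≤ (R.map (Int.cast : ℤ → ℝ)).mulVec v 1 ∧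
       0 ≤ (R.map (Int.cast : ℤ → ℝ)).mulVec v 2 ∧
       (R.map (Int.cast : ℤ → ℝ)).mulVec v 2 ≤ (R.map (Int.cast : ℤ → ℝ)).mulVec v 0 + (R.map (Int.cast : ℤ → ℝ)).mulVec v 1)) :
    R 0 2 = 0 ∧ R 1 2 = 0 ∧ R 2 2 = 1 ∧
    0 ≤ R 0 0 ∧ 0 ≤ R 0 1 ∧ 0 ≤ R 1 0 ∧ 0 ≤ R 1 1 ∧ 0 ≤ R 2 0 ∧ 0 ≤ R 2 1 ∧
    R 0 0 * R 1 1 - R 0 1 * R 1 0 = 1 ∧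
    R 2 0 < R 0 0 + R 1 0 ∧ R 2 1 < R 0 1 + R 1 1 := by
  have e₃ := hC3 ![0, 0, 1] (by simp)
  have e₁ := hC1 ![1, 0, 0] (by simp)
  have e₂ := hC1 ![0, 1, 0] (by simp)
  have e₁₃ := hC1 ![1, 0, 1] (by simp)
  have e₂₃ := hC1 ![0, 1, 1] (by simp)
  simp only [map_intCast_mulVec_vec3, mul_zero, mul_one, add_zero, zero_add] at e₃ e₁ e₂ e₁₃ e₂₃
  obtain ⟨h02, h12, h22_nonneg⟩ : R 0 2 = 0 ∧ R 1 2 = 0 ∧ 0 ≤ R 2 2 := by exact_mod_cast e₃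
  obtain ⟨h00, h10, h20, -⟩ : 0 ≤ R 0 0 ∧ 0 ≤ R 1 0 ∧ 0 ≤ R 2 0 ∧ _ := by exact_mod_cast e₁
  obtain ⟨h01, h11, h21, -⟩ : 0 ≤ R 0 1 ∧ 0 ≤ R 1 1 ∧ 0 ≤ R 2 1 ∧ _ := by exact_mod_cast e₂
  have hE : R 2 0 + R 2 2 ≤ R 0 0 + R 0 2 + (R 1 0 + R 1 2) := by exact_mod_cast e₁₃.2.2.2
  have hF : R 2 1 + R 2 2 ≤ R 0 1 + R 0 2 + (R 1 1 + R 1 2) := by exact_mod_cast e₂₃.2.2.2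
  have hminor : R 2 2 * (R 0 0 * R 1 1 - R 0 1 * R 1 0) = 1 := by
    rw [← R.det_fin_three_of_col_two_eq_zero h02 h12, hdet]
  have h22 : R 2 2 = 1 := Int.eq_one_of_mul_eq_one_right h22_nonneg hminor
  rw [h22, one_mul] at hminor
  refine ⟨h02, h12, h22, h00, h01, h10, h11, h20, h21, hminor, ?_, ?_⟩ <;> omega
end

section
/- Let R = [[A,B,0],[C,D,0],[E,F,1]] be an integer matrix with determinant 1 whose inverse maps C₂ = {(x,y,z) : 0 ≤ x, y ≤ 0, y ≤ z ≤ x} into itself, and assume all of A,B,C,D,E,F are nonnegative. Then −C ≤ C·F − D·E < D. -/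
/-!
Since det R = 1, R⁻¹ is explicit, with last row (CF − DE, BE − AF, 1). The points (1,0,0) and
(1,0,1) lie in C₂, and the conditions y ≤ z of the image of the first and z ≤ x of the image of
the second are the two inequalities −C ≤ CF − DE and CF − DE + 1 ≤ D.
-/

open Matrix

section UnimodularBlock

variable {K : Type*} [CommRing K]

theorem inv_unimodular_block_eq (a b c d e f : K) (hdet : a * d - b * c = 1) :
    (!![a, b, 0; c, d, 0; e, f, 1])⁻¹ = !![d, -b, 0; -c, a, 0; c * f - d * e, b * e - a * f, 1] := by
  apply inv_eq_right_inv
  ext i j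
  fin_cases i <;> fin_cases j <;>
    simp [mul_apply, Fin.sum_univ_three] <;> first | ring1 | linear_combination hdet

theorem unimodular_block_inv_mulVec (a b c d e f x z : K) :
    !![d, -b, 0; -c, a, 0; c * f - d * e, b * e - a * f, 1] *ᵥ ![x, 0, z] =
      ![d * x, -c * x, (c * f - d * e) * x + z] := by
  ext i
  fin_cases i <;> simp [mulVec, dotProduct, Fin.sum_univ_three]

end UnimodularBlock

theorem stmt_9 (A B C D E F : ℕ)
    (R : Matrix (Fin 3) (Fin 3) ℤ)
    (hR : R = !![(A:ℤ), B, 0; C, D, 0; E, F, 1])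
    (hdet : (A : ℤ) * D - B * C = 1)
    (hC2 : ∀ v : Fin 3 → ℝ, (0 ≤ v 0 ∧ v 1 ≤ 0 ∧ v 1 ≤ v 2 ∧ v 2 ≤ v 0) →
      (0 ≤ ((R.map (Int.cast : ℤ → ℝ))⁻¹).mulVec v 0 ∧
       ((R.map (Int.cast : ℤ → ℝ))⁻¹).mulVec v 1 ≤ 0 ∧
       ((R.map (Int.cast : ℤ → ℝ))⁻¹).mulVec v 1 ≤ ((R.map (Int.cast : ℤ → ℝ))⁻¹).mulVec v 2 ∧
       ((R.map (Int.cast : ℤ → ℝ))⁻¹).mulVec v 2 ≤ ((R.map (Int.cast : ℤ → ℝ))⁻¹).mulVec v 0)) :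
    -(C : ℤ) ≤ C * F - D * E ∧ (C : ℤ) * F - D * E < D := by
  have hmap : R.map (Int.cast : ℤ → ℝ) = !![(A : ℝ), B, 0; C, D, 0; E, F, 1] := by
    subst hR
    ext i j
    fin_cases i <;> fin_cases j <;> simp
  have hinv := inv_unimodular_block_eq (A : ℝ) B C D E F (by exact_mod_cast hdet)
  have h₁ := hC2 ![1, 0, 0] (by norm_num [cons_val_two])
  have h₂ := hC2 ![1, 0, 1] (by norm_num [cons_val_two])
  rw [hmap, hinv, unimodular_block_inv_mulVec] at h₁ h₂
  simp only [cons_val_zero, cons_val_one, cons_val_two, head_cons, tail_cons, mul_one,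
    add_zero] at h₁ h₂
  constructor
  · have hreal : ((-C : ℤ) : ℝ) ≤ ((C * F - D * E : ℤ) : ℝ) := by
      push_cast; linarith [h₁.2.2.1]
    exact_mod_cast hreal
  · have hreal : ((C * F - D * E + 1 : ℤ) : ℝ) ≤ D := by push_cast; linarith [h₂.2.2.2]
    have hint : (C * F - D * E + 1 : ℤ) ≤ D := by exact_mod_cast hreal
    omega
end

section
/- Every 3×3 integer matrix R with determinant 1 of the form [[A,B,0],[C,D,0],[E,F,1]] with nonnegative entries satisfying E < A + C, F < B + D, and −C ≤ C·F − D·E < D belongs to the multiplicative monoid generated by the four matrices R_G, R_G̃, R_D, R_D̃. -/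
/-!
Write the third row as `(E, F) = x • (A, B) + y • (C, D)` with `x = D E - C F` and
`y = A F - B E` (integers, since `A D - B C = 1`); the hypotheses say `-D < x ≤ C`.
We descend on `A + B + C + D`. If `D ≤ B` (so `C < A` by the determinant), left-divide by `R_G̃`
when the third row dominates the second and by `R_G` otherwise; both keep `x`, and in the second
case the bound on `x` is exactly what keeps the third row in the box. If `A ≤ C`, conjugate by
the swap of the first two coordinates: it exchanges `R_G ↔ R_D̃`, `R_G̃ ↔ R_D` and `x ↔ y`, and
the box conditions turn `-D < x ≤ C` into `-A < y ≤ B`, so the hypotheses are invariant.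
Otherwise the matrix is the identity.
-/

open Matrix

def blockMat (A B C D E F : ℤ) : Matrix (Fin 3) (Fin 3) ℤ := !![A, B, 0; C, D, 0; E, F, 1]

def RG : Matrix (Fin 3) (Fin 3) ℤ := !![1, 1, 0; 0, 1, 0; 0, 0, 1]

-- `RGt` and `RDt` are the paper's `R_G̃` and `R_D̃`.
def RGt : Matrix (Fin 3) (Fin 3) ℤ := !![1, 1, 0; 0, 1, 0; 0, 1, 1]

def RD : Matrix (Fin 3) (Fin 3) ℤ := !![1, 0, 0; 1, 1, 0; 1, 0, 1]

def RDt : Matrix (Fin 3) (Fin 3) ℤ := !![1, 0, 0; 1, 1, 0; 0, 0, 1]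

def generators : Set (Matrix (Fin 3) (Fin 3) ℤ) := {RG, RGt, RD, RDt}

lemma blockMat_eq_RG_mul (A B C D E F : ℤ) :
    blockMat A B C D E F = RG * blockMat (A - C) (B - D) C D E F := by
  simp [blockMat, RG]

lemma blockMat_eq_RGt_mul (A B C D E F : ℤ) :
    blockMat A B C D E F = RGt * blockMat (A - C) (B - D) C D (E - C) (F - D) := by
  simp [blockMat, RGt]

lemma blockMat_one_zero_zero_one : blockMat 1 0 0 1 0 0 = 1 := by
  rw [one_fin_three]
  rfl

abbrev swapConj : Matrix (Fin 3) (Fin 3) ℤ ≃+* Matrix (Fin 3) (Fin 3) ℤ :=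
  reindexRingEquiv ℤ (Equiv.swap 0 1)

lemma swapConj_blockMat (A B C D E F : ℤ) :
    swapConj (blockMat A B C D E F) = blockMat D C B A F E := by
  ext i j
  fin_cases i <;> fin_cases j <;> rfl

lemma swapConj_mem_closure_generators {M : Matrix (Fin 3) (Fin 3) ℤ}
    (hM : M ∈ Submonoid.closure generators) : swapConj M ∈ Submonoid.closure generators := by
  have hgen : ∀ g ∈ generators, swapConj g ∈ generators := by
    simp only [generators, Set.mem_insert_iff, Set.mem_singleton_iff]
    rintro g (rfl | rfl | rfl | rfl)
    · exact Or.inr (Or.inr (Or.inr (by ext i j; fin_cases i <;> fin_cases j <;> rfl)))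
    · exact Or.inr (Or.inr (Or.inl (by ext i j; fin_cases i <;> fin_cases j <;> rfl)))
    · exact Or.inr (Or.inl (by ext i j; fin_cases i <;> fin_cases j <;> rfl))
    · exact Or.inl (by ext i j; fin_cases i <;> fin_cases j <;> rfl)
  have hle : Submonoid.closure generators ≤
      (Submonoid.closure generators).comap (swapConj : Matrix (Fin 3) (Fin 3) ℤ →* _) :=
    Submonoid.closure_le.mpr fun g hg => Submonoid.subset_closure (hgen g hg)
  exact hle hM

lemma le_or_le_or_eq_one {A B C D : ℤ} (hB : 0 ≤ B) (hC : 0 ≤ C) (hdet : A * D - B * C = 1) :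
    D ≤ B ∨ A ≤ C ∨ (A = 1 ∧ B = 0 ∧ C = 0 ∧ D = 1) := by
  rcases le_or_gt D B with hDB | hBD
  · exact Or.inl hDB
  rcases le_or_gt A C with hAC | hCA
  · exact Or.inr (Or.inl hAC)
  have hB0 : B = 0 := by nlinarith
  have hC0 : C = 0 := by nlinarith
  subst hB0 hC0
  have hA1 : A = 1 := Int.eq_one_of_mul_eq_one_right (b := D) hCA.le (by linarith)
  subst hA1
  exact Or.inr (Or.inr ⟨rfl, rfl, rfl, by linarith⟩)

structure Admissible (A B C D E F : ℤ) : Prop where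
  nonneg_A : 0 ≤ A
  nonneg_B : 0 ≤ B
  nonneg_C : 0 ≤ C
  nonneg_D : 0 ≤ D
  nonneg_E : 0 ≤ E
  nonneg_F : 0 ≤ F
  det : A * D - B * C = 1
  E_lt : E < A + C
  F_lt : F < B + D
  neg_C_le : -C ≤ C * F - D * E
  lt_D : C * F - D * E < D

namespace Admissible

variable {A B C D E F : ℤ}

lemma D_pos (h : Admissible A B C D E F) : 0 < D := by
  nlinarith [h.det, mul_nonneg h.nonneg_B h.nonneg_C, h.nonneg_A, h.nonneg_D]

lemma C_lt_A (h : Admissible A B C D E F) (hDB : D ≤ B) : C < A := by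
  by_contra! hAC
  nlinarith [h.det, mul_le_mul_of_nonneg_left hDB h.nonneg_A,
    mul_le_mul_of_nonneg_right hAC h.nonneg_B]

lemma swap (h : Admissible A B C D E F) : Admissible D C B A F E := by
  obtain ⟨hA, hB, hC, hD, hE, hF, hdet, hEb, hFb, hlo, hhi⟩ := h
  have hF_eq : F = (D * E - C * F) * B + (A * F - B * E) * D := by linear_combination (-F) * hdet
  refine ⟨hD, hC, hB, hA, hF, hE, by linear_combination hdet, by linarith, by linarith, ?_, ?_⟩
  · by_contra! hy
    nlinarith [mul_le_mul_of_nonneg_left (show 1 - D ≤ D * E - C * F by linarith) hB,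
      mul_le_mul_of_nonneg_left (show B + 1 ≤ A * F - B * E by linarith) hD]
  · by_contra! hy
    nlinarith [mul_le_mul_of_nonneg_left (show D * E - C * F ≤ C by linarith) hB,
      mul_le_mul_of_nonneg_left (show A * F - B * E ≤ -A by linarith) hD]

lemma sub_second_row_of_le (h : Admissible A B C D E F) (hDB : D ≤ B) (hCE : C ≤ E)
    (hDF : D ≤ F) :
    Admissible (A - C) (B - D) C D (E - C) (F - D) := by
  have hCA := h.C_lt_A hDB
  obtain ⟨hA, hB, hC, hD, hE, hF, hdet, hEb, hFb, hlo, hhi⟩ := h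
  exact ⟨by linarith, by linarith, hC, hD, by linarith, by linarith,
    by linear_combination hdet, by linarith, by linarith, by linarith, by linarith⟩

lemma sub_second_row (h : Admissible A B C D E F) (hDB : D ≤ B) (hrow : ¬(C ≤ E ∧ D ≤ F)) :
    Admissible (A - C) (B - D) C D E F := by
  have hCA := h.C_lt_A hDB
  have hD := h.D_pos
  obtain ⟨hA, hB, hC, -, hE, hF, hdet, hEb, hFb, hlo, hhi⟩ := h
  have hEA : E < A := by
    by_contra! hAE
    have hFD : F < D := lt_of_not_ge fun hDF => hrow ⟨by linarith, hDF⟩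
    nlinarith [mul_le_mul_of_nonneg_left hAE hD.le,
      mul_le_mul_of_nonneg_left (show F ≤ D - 1 by linarith) hC,
      mul_le_mul_of_nonneg_left (show 1 ≤ A - C by linarith) hD.le]
  have hFB : F < B := by
    by_contra! hBF
    have hEC : E < C := lt_of_not_ge fun hCE => hrow ⟨hCE, by linarith⟩
    nlinarith [mul_le_mul_of_nonneg_left hBF hC,
      mul_le_mul_of_nonneg_left (show E ≤ C - 1 by linarith) hD.le,
      mul_le_mul_of_nonneg_left hDB hC]
  exact ⟨by linarith, by linarith, hC, hD.le, hE, hF, by linear_combination hdet,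
    by linarith, by linarith, hlo, hhi⟩

lemma blockMat_mem_closure_of_D_le_B (h : Admissible A B C D E F) (hDB : D ≤ B)
    (ih : ∀ A' B' E' F', Admissible A' B' C D E' F' → A' + B' < A + B →
      blockMat A' B' C D E' F' ∈ Submonoid.closure generators) :
    blockMat A B C D E F ∈ Submonoid.closure generators := by
  have hsize : A - C + (B - D) < A + B := by linarith [h.neg_C_le, h.lt_D]
  by_cases hrow : C ≤ E ∧ D ≤ F
  · rw [blockMat_eq_RGt_mul]
    exact Submonoid.mul_mem _ (Submonoid.subset_closure (by simp [generators]))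
      (ih _ _ _ _ (h.sub_second_row_of_le hDB hrow.1 hrow.2) hsize)
  · rw [blockMat_eq_RG_mul]
    exact Submonoid.mul_mem _ (Submonoid.subset_closure (by simp [generators]))
      (ih _ _ _ _ (h.sub_second_row hDB hrow) hsize)

theorem blockMat_mem_closure (h : Admissible A B C D E F) :
    blockMat A B C D E F ∈ Submonoid.closure generators := by
  obtain ⟨n, hn⟩ : ∃ n : ℕ, A + B + C + D ≤ n := ⟨(A + B + C + D).toNat, Int.self_le_toNat _⟩
  induction n generalizing A B C D E F with
  | zero =>
    push_cast at hn
    linarith [h.nonneg_A, h.nonneg_B, h.nonneg_C, h.D_pos]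
  | succ n ih =>
    have ih' : ∀ {A' B' C' D' E' F'}, Admissible A' B' C' D' E' F' →
        A' + B' + C' + D' < A + B + C + D →
        blockMat A' B' C' D' E' F' ∈ Submonoid.closure generators :=
      fun h' hlt => ih h' (by push_cast at hn; linarith)
    rcases le_or_le_or_eq_one h.nonneg_B h.nonneg_C h.det with hDB | hAC | ⟨rfl, rfl, rfl, rfl⟩
    · exact h.blockMat_mem_closure_of_D_le_B hDB fun _ _ _ _ h' hlt => ih' h' (by linarith)
    · have hswap :=
        h.swap.blockMat_mem_closure_of_D_le_B hAC fun _ _ _ _ h' hlt => ih' h' (by linarith)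
      simpa only [swapConj_blockMat] using swapConj_mem_closure_generators hswap
    · obtain rfl : E = 0 := by linarith [h.nonneg_E, h.E_lt]
      obtain rfl : F = 0 := by linarith [h.nonneg_F, h.F_lt]
      rw [blockMat_one_zero_zero_one]
      exact Submonoid.one_mem _

end Admissible

theorem stmt_11 (A B C D E F : ℕ)
    (hdet : (A : ℤ) * D - B * C = 1)
    (hE : (E : ℤ) < A + C) (hF : (F : ℤ) < B + D)
    (h1 : -(C : ℤ) ≤ C * F - D * E) (h2 : (C : ℤ) * F - D * E < D) :
    (!![(A:ℤ), B, 0; C, D, 0; E, F, 1] : Matrix (Fin 3) (Fin 3) ℤ) ∈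
      Submonoid.closure ({!![1,1,0;0,1,0;0,0,1], !![1,1,0;0,1,0;0,1,1],
        !![1,0,0;1,1,0;1,0,1], !![1,0,0;1,1,0;0,0,1]} : Set (Matrix (Fin 3) (Fin 3) ℤ)) :=
  Admissible.blockMat_mem_closure ⟨by positivity, by positivity, by positivity, by positivity,
    by positivity, by positivity, hdet, hE, hF, h1, h2⟩
end

section
/- For every matrix M = [[A,B],[C,D]] with nonnegative integer entries and determinant 1, and every S ∈ {0,1,…,A+B+C+D−2}, there exists a unique pair (E,F) of natural numbers with E + F = S such that the matrix [[A,B,0],[C,D,0],[E,F,1]] satisfies E < A+C, F < B+D, and −C ≤ C·F − D·E < D. -/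
/-!
On the line `E + F = S` the cross term is `C * F - D * E = C * (S + 1) - (C + D) * E - C`, so the
window `-C ≤ C * F - D * E < D` says exactly that `E = ⌊C (S + 1) / (C + D)⌋`; this gives existence
and uniqueness at once. The bounds `E < A + C` and `F < B + D` then follow from `S ≤ A + B + C + D - 2`
because `(A + C)(C + D) - C (A + B + C + D - 1) = 1 + C` and
`(B + D)(C + D) - D (A + B + C + D - 1) = D - 1` by `A D - B C = 1`.
-/

lemma pos_of_det_eq_one {A B C D : ℕ} (hdet : (A : ℤ) * D - B * C = 1) : 0 < D := by
  rcases Nat.eq_zero_or_pos D with rfl | hD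
  · push_cast at hdet
    nlinarith [Int.natCast_nonneg (B * C)]
  · exact hD

lemma cross_bounds_iff_eq_div {C D E F S : ℕ} (hCD : 0 < C + D) (hEF : E + F = S) :
    (-(C : ℤ) ≤ C * F - D * E ∧ (C : ℤ) * F - D * E < D) ↔ E = C * (S + 1) / (C + D) := by
  have hcross : (C : ℤ) * F - D * E = C * (S + 1) - E * (C + D) - C := by
    subst hEF; push_cast; ring
  rw [eq_comm, Nat.div_eq_iff hCD, hcross]
  have : C * (S + 1) ≤ E * (C + D) + (C + D) - 1 ↔ C * (S + 1) < E * (C + D) + (C + D) := by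
    omega
  rw [this]
  zify
  constructor <;> rintro ⟨h₁, h₂⟩ <;> constructor <;> linarith

lemma fst_lt_of_cross_bounds {A B C D E F : ℕ} (hdet : (A : ℤ) * D - B * C = 1)
    (hS : E + F + 2 ≤ A + B + C + D) (hcross : -(C : ℤ) ≤ C * F - D * E) : E < A + C := by
  have hS' : (E : ℤ) + F + 2 ≤ A + B + C + D := by exact_mod_cast hS
  have key : ((C + D) * E : ℤ) < (C + D) * (A + C) := by
    nlinarith [Int.natCast_nonneg C]
  exact_mod_cast lt_of_mul_lt_mul_left key (by positivity)

lemma snd_lt_of_cross_bounds {A B C D E F : ℕ} (hdet : (A : ℤ) * D - B * C = 1)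
    (hS : E + F + 2 ≤ A + B + C + D) (hcross : (C : ℤ) * F - D * E < D) : F < B + D := by
  have hS' : (E : ℤ) + F + 2 ≤ A + B + C + D := by exact_mod_cast hS
  have hD : (1 : ℤ) ≤ D := by exact_mod_cast pos_of_det_eq_one hdet
  have key : ((C + D) * F : ℤ) < (C + D) * (B + D) := by
    nlinarith [Int.natCast_nonneg D]
  exact_mod_cast lt_of_mul_lt_mul_left key (by positivity)

theorem stmt_15 (A B C D : ℕ)
    (hdet : (A : ℤ) * D - B * C = 1)
    (S : ℕ) (hS : S + 2 ≤ A + B + C + D) :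
    ∃! p : ℕ × ℕ, p.1 + p.2 = S ∧
      (p.1 : ℤ) < A + C ∧ (p.2 : ℤ) < B + D ∧
      -(C : ℤ) ≤ C * p.2 - D * p.1 ∧ (C : ℤ) * p.2 - D * p.1 < D := by
  have hD := pos_of_det_eq_one hdet
  have hCD : 0 < C + D := by omega
  set E := C * (S + 1) / (C + D)
  have hES : E ≤ S := Nat.lt_succ_iff.mp <| Nat.div_lt_of_lt_mul <|
    Nat.mul_lt_mul_of_pos_right (by omega) S.succ_pos
  have hsum : E + (S - E) = S := Nat.add_sub_cancel' hES
  obtain ⟨hlow, hhigh⟩ := (cross_bounds_iff_eq_div hCD hsum).2 rfl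
  refine ⟨(E, S - E), ⟨hsum, ?_, ?_, hlow, hhigh⟩, ?_⟩
  · exact_mod_cast fst_lt_of_cross_bounds hdet (by omega) hlow
  · exact_mod_cast snd_lt_of_cross_bounds hdet (by omega) hhigh
  · rintro ⟨E', F'⟩ ⟨hsum', -, -, hcross⟩
    have hE' : E' = E := (cross_bounds_iff_eq_div hCD hsum').1 hcross
    ext <;> simp only at hsum' ⊢ <;> omega
end
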